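/- arXiv:1105.1551 — 8 statements merged into one kernel-verified Lean document; each statement's English description precedes it below -/
import Mathlib

section
/- Gallagher's larger sieve bound: Let α > 0 and suppose S ⊆ {0,...,N} occupies at most α·p residue classes modulo p for every prime p. Then |S| ≪_α N^α, i.e., there is a constant C(α) with |S| ≤ C(α)·N^α. -/
/-!
For each modulus `q`, Cauchy–Schwarz over the residue classes met by `S` gives
`|S|² ≤ #(classes mod q) · #{(s, t) ∈ S² : s ≡ t mod q} ≤ αq · (|S| + D_q)`, where `D_q` counts the
off-diagonal congruent pairs; the hypothesis passes from `p` to `p^(k+1)` because each class mod `p`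
splits into `p^k` classes mod `p^(k+1)`. Weight by `Λ(q)/q` and sum over `q ≤ Q := |S|`. Since
`log Q! = ∑_{d ≤ Q} Λ(d) ⌊Q/d⌋`, the left side is at least `|S|² (log Q - 1)`. On the right,
`∑_{q ≤ Q} Λ(q) = ψ(Q) ≤ (log 4 + 4) Q`, and for `s ≠ t` the `Λ(q)` with `q ∣ s - t` add up to at
most `log |s - t| ≤ log N`. Hence `log |S| ≤ 1 + α (log 4 + 4) + α log N`.
-/

open Finset ArithmeticFunction
open scoped Chebyshev Nat

theorem Finset.sq_card_le_card_image_mul_card_filter_eq {ι β : Type*} [DecidableEq β]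
    (S : Finset ι) (f : ι → β) :
    #S ^ 2 ≤ #(S.image f) * #{x ∈ S ×ˢ S | f x.1 = f x.2} := by
  have hfiber : ∀ b, {x ∈ S ×ˢ S | f x.1 = f x.2 ∧ f x.1 = b} =
      {s ∈ S | f s = b} ×ˢ {s ∈ S | f s = b} := by
    intro b; ext x; simp only [mem_filter, mem_product]; grind
  calc #S ^ 2 = (∑ b ∈ S.image f, #{s ∈ S | f s = b}) ^ 2 := by rw [← card_eq_sum_card_image]
    _ ≤ #(S.image f) * ∑ b ∈ S.image f, #{s ∈ S | f s = b} ^ 2 := sq_sum_le_card_mul_sum_sq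
    _ = #(S.image f) * #{x ∈ S ×ˢ S | f x.1 = f x.2} := by
      rw [card_eq_sum_card_fiberwise (f := fun x : ι × ι => f x.1) (t := S.image f)
        fun x hx => mem_image_of_mem f (mem_product.1 (mem_filter.1 hx).1).1]
      simp_rw [filter_filter, hfiber, card_product, sq]

theorem Finset.card_filter_product_self_eq {ι β : Type*} [DecidableEq ι] [DecidableEq β]
    (S : Finset ι) (f : ι → β) :
    #{x ∈ S ×ˢ S | f x.1 = f x.2} = #S + #{x ∈ S.offDiag | f x.1 = f x.2} := by
  rw [← diag_union_offDiag, filter_union, card_union_of_disjoint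
    (disjoint_filter_filter (disjoint_diag_offDiag S)), filter_true_of_mem, diag_card]
  intro x hx; rw [(mem_diag.1 hx).2]

theorem Finset.card_image_natCast_zmod_mul_le (S : Finset ℕ) {d m : ℕ} (hd : 0 < d) (hm : 0 < m) :
    #(S.image (fun s : ℕ => (s : ZMod (d * m)))) ≤ #(S.image (fun s : ℕ => (s : ZMod d))) * m := by
  -- `s mod dm` is recovered from `s mod d` and the digit `⌊(s mod dm) / d⌋ < m`.
  let digits : ℕ → ZMod d × ℕ := fun s => ((s : ZMod d), s % (d * m) / d)
  let F : ZMod d × ℕ → ZMod (d * m) := fun x => ((x.1.val + d * x.2 : ℕ) : ZMod (d * m))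
  have hF : ∀ s, F (digits s) = s := by
    intro s
    simp only [F, digits, ZMod.val_natCast, ← Nat.mod_mul_right_mod s d m, Nat.mod_add_div,
      ZMod.natCast_mod]
  have himage : S.image digits ⊆ S.image (fun s : ℕ => (s : ZMod d)) ×ˢ range m := by
    intro x hx
    obtain ⟨s, hs, rfl⟩ := mem_image.1 hx
    exact mem_product.2 ⟨mem_image_of_mem _ hs,
      mem_range.2 (Nat.div_lt_of_lt_mul (Nat.mod_lt _ (by positivity)))⟩
  calc #(S.image (fun s : ℕ => (s : ZMod (d * m)))) = #((S.image digits).image F) := by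
        rw [image_image]; congr 1; exact image_congr fun s _ => (hF s).symm
    _ ≤ #(S.image digits) := card_image_le
    _ ≤ _ := (card_le_card himage).trans (by rw [card_product, card_range])

theorem ArithmeticFunction.log_factorial_eq_sum_vonMangoldt_mul_div (n : ℕ) :
    Real.log n ! = ∑ d ∈ Ioc 0 n, Λ d * (n / d : ℕ) := by
  rw [← sum_Ioc_mul_zeta_eq_sum, vonMangoldt_mul_zeta, ← prod_Ico_id_eq_factorial, Nat.cast_prod,
    Real.log_prod fun k hk => by have := (mem_Ico.1 hk).1; positivity]
  rfl

theorem Real.natCast_mul_log_sub_le_log_factorial (n : ℕ) :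
    n * Real.log n - n ≤ Real.log n ! := by
  rcases Nat.eq_zero_or_pos n with rfl | hn
  · simp
  have h := Real.pow_div_factorial_le_exp n n.cast_nonneg n
  rw [← Real.log_le_iff_le_exp (by positivity), Real.log_div (by positivity) (by positivity),
    Real.log_pow] at h
  linarith

theorem ArithmeticFunction.log_sub_one_le_sum_vonMangoldt_div {n : ℕ} (hn : n ≠ 0) :
    Real.log n - 1 ≤ ∑ d ∈ Ioc 0 n, Λ d / d := by
  suffices n * (Real.log n - 1) ≤ n * ∑ d ∈ Ioc 0 n, Λ d / d from
    le_of_mul_le_mul_left this (by positivity)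
  calc n * (Real.log n - 1) ≤ Real.log n ! := by
        linarith [Real.natCast_mul_log_sub_le_log_factorial n]
    _ = ∑ d ∈ Ioc 0 n, Λ d * (n / d : ℕ) := log_factorial_eq_sum_vonMangoldt_mul_div n
    _ ≤ ∑ d ∈ Ioc 0 n, Λ d * (n / d) := by
      gcongr with d
      exact Nat.cast_div_le
    _ = n * ∑ d ∈ Ioc 0 n, Λ d / d := by rw [mul_sum]; congr! 1; ring

theorem ArithmeticFunction.sum_filter_dvd_vonMangoldt_le_log (A : Finset ℕ) {m : ℕ} (hm : m ≠ 0) :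
    ∑ q ∈ A with q ∣ m, Λ q ≤ Real.log m := by
  rw [← vonMangoldt_sum]
  exact sum_le_sum_of_subset_of_nonneg (fun q hq => Nat.mem_divisors.2 ⟨(mem_filter.1 hq).2, hm⟩)
    fun _ _ _ => vonMangoldt_nonneg

namespace LargerSieve

variable {S : Finset ℕ} {N : ℕ} {α : ℝ}

theorem card_image_natCast_zmod_le_of_isPrimePow
    (hS : ∀ p : ℕ, p.Prime → (#(S.image (fun s : ℕ => (s : ZMod p))) : ℝ) ≤ α * p)
    {q : ℕ} (hq : IsPrimePow q) : (#(S.image (fun s : ℕ => (s : ZMod q))) : ℝ) ≤ α * q := by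
  obtain ⟨p, k, hp, hk, rfl⟩ := (isPrimePow_nat_iff q).1 hq
  obtain ⟨k, rfl⟩ := Nat.exists_eq_add_of_lt hk
  rw [zero_add, pow_succ']
  calc (#(S.image (fun s : ℕ => (s : ZMod (p * p ^ k)))) : ℝ)
      ≤ #(S.image (fun s : ℕ => (s : ZMod p))) * p ^ k := by
        exact_mod_cast card_image_natCast_zmod_mul_le S hp.pos (pow_pos hp.pos k)
    _ ≤ α * p * p ^ k := by gcongr; exact hS p hp
    _ = α * ↑(p * p ^ k) := by push_cast; ring

theorem sum_vonMangoldt_mul_card_offDiag_natCast_eq_le (A : Finset ℕ) (hSN : ∀ s ∈ S, s ≤ N) :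
    ∑ q ∈ A, Λ q * #{x ∈ S.offDiag | (x.1 : ZMod q) = x.2} ≤ #S ^ 2 * Real.log N := by
  have hpair : ∀ x ∈ S.offDiag, ∑ q ∈ A with (x.1 : ZMod q) = x.2, Λ q ≤ Real.log N := by
    intro x hx
    obtain ⟨h1, h2, hne⟩ := mem_offDiag.1 hx
    have hm : ((x.2 : ℤ) - x.1).natAbs ≠ 0 := by omega
    have hcong : ∀ q : ℕ, (x.1 : ZMod q) = x.2 ↔ q ∣ ((x.2 : ℤ) - x.1).natAbs := fun q => by
      rw [ZMod.natCast_eq_natCast_iff, Nat.modEq_iff_dvd, Int.natCast_dvd]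
    calc ∑ q ∈ A with (x.1 : ZMod q) = x.2, Λ q
        = ∑ q ∈ A with q ∣ ((x.2 : ℤ) - x.1).natAbs, Λ q := by simp_rw [hcong]
      _ ≤ Real.log ((x.2 : ℤ) - x.1).natAbs := sum_filter_dvd_vonMangoldt_le_log A hm
      _ ≤ Real.log N := by
        gcongr
        have := hSN _ h1; have := hSN _ h2; omega
  calc ∑ q ∈ A, Λ q * #{x ∈ S.offDiag | (x.1 : ZMod q) = x.2}
      = ∑ x ∈ S.offDiag, ∑ q ∈ A with (x.1 : ZMod q) = x.2, Λ q := by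
        simp_rw [card_eq_sum_ones, Nat.cast_sum, mul_sum, sum_filter]
        rw [sum_comm]; simp
    _ ≤ #S.offDiag * Real.log N := by simpa using sum_le_sum hpair
    _ ≤ #S ^ 2 * Real.log N := by
        gcongr
        rw [offDiag_card]; exact_mod_cast (Nat.sub_le _ _).trans (by rw [sq])

theorem sq_card_mul_vonMangoldt_div_le
    (hS : ∀ p : ℕ, p.Prime → (#(S.image (fun s : ℕ => (s : ZMod p))) : ℝ) ≤ α * p) (q : ℕ) :
    #S ^ 2 * (Λ q / q) ≤ α * (Λ q * (#S + #{x ∈ S.offDiag | (x.1 : ZMod q) = x.2})) := by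
  by_cases hq : Λ q = 0
  · simp [hq]
  have hq_pos : (0 : ℝ) < q := by exact_mod_cast (vonMangoldt_ne_zero_iff.1 hq).pos
  have hpairs := sq_card_le_card_image_mul_card_filter_eq S (fun s : ℕ => (s : ZMod q))
  rw [card_filter_product_self_eq] at hpairs
  have hclasses := card_image_natCast_zmod_le_of_isPrimePow hS (vonMangoldt_ne_zero_iff.1 hq)
  calc #S ^ 2 * (Λ q / q)
      ≤ #(S.image (fun s : ℕ => (s : ZMod q))) * (#S + #{x ∈ S.offDiag | (x.1 : ZMod q) = x.2})
          * (Λ q / q) := by gcongr; exact_mod_cast hpairs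
    _ ≤ α * q * (#S + #{x ∈ S.offDiag | (x.1 : ZMod q) = x.2}) * (Λ q / q) := by gcongr
    _ = α * (Λ q * (#S + #{x ∈ S.offDiag | (x.1 : ZMod q) = x.2})) := by field_simp

theorem sq_card_mul_sum_vonMangoldt_div_le (hα : 0 ≤ α) (hSN : ∀ s ∈ S, s ≤ N)
    (hS : ∀ p : ℕ, p.Prime → (#(S.image (fun s : ℕ => (s : ZMod p))) : ℝ) ≤ α * p) (Q : ℕ) :
    #S ^ 2 * ∑ q ∈ Ioc 0 Q, Λ q / q ≤ α * (#S * ψ Q + #S ^ 2 * Real.log N) := by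
  have hψ : ψ Q = ∑ q ∈ Ioc 0 Q, Λ q := by simp [Chebyshev.psi]
  calc #S ^ 2 * ∑ q ∈ Ioc 0 Q, Λ q / q
      ≤ ∑ q ∈ Ioc 0 Q, α * (Λ q * (#S + #{x ∈ S.offDiag | (x.1 : ZMod q) = x.2})) := by
        rw [mul_sum]; exact sum_le_sum fun q _ => sq_card_mul_vonMangoldt_div_le hS q
    _ = α * (#S * ψ Q + ∑ q ∈ Ioc 0 Q, Λ q * #{x ∈ S.offDiag | (x.1 : ZMod q) = x.2}) := by
        simp_rw [hψ, mul_add, sum_add_distrib, mul_sum, mul_comm (Λ _) (#S : ℝ)]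
    _ ≤ α * (#S * ψ Q + #S ^ 2 * Real.log N) := by
        gcongr; exact sum_vonMangoldt_mul_card_offDiag_natCast_eq_le _ hSN

theorem log_card_le (hα : 0 ≤ α) (hSN : ∀ s ∈ S, s ≤ N)
    (hS : ∀ p : ℕ, p.Prime → (#(S.image (fun s : ℕ => (s : ZMod p))) : ℝ) ≤ α * p)
    (hS_ne : S.Nonempty) :
    Real.log #S ≤ 1 + α * (Real.log 4 + 4) + α * Real.log N := by
  set T : ℝ := (#S : ℝ)
  have hT : 0 < T := by simpa [T] using hS_ne.card_pos
  have hmertens := log_sub_one_le_sum_vonMangoldt_div hS_ne.card_ne_zero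
  have hcheb := Chebyshev.psi_le_const_mul_self (x := T) hT.le
  have hsieve := sq_card_mul_sum_vonMangoldt_div_le hα hSN hS #S
  suffices T ^ 2 * (Real.log T - 1) ≤ T ^ 2 * (α * (Real.log 4 + 4) + α * Real.log N) by
    linarith [le_of_mul_le_mul_left this (by positivity)]
  calc T ^ 2 * (Real.log T - 1) ≤ T ^ 2 * ∑ q ∈ Ioc 0 #S, Λ q / q := by gcongr
    _ ≤ α * (T * ψ T + T ^ 2 * Real.log N) := hsieve
    _ ≤ α * (T * ((Real.log 4 + 4) * T) + T ^ 2 * Real.log N) := by gcongr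
    _ = T ^ 2 * (α * (Real.log 4 + 4) + α * Real.log N) := by ring

end LargerSieve

/-- Gallagher's larger sieve bound.  If `S ⊆ {0,…,N}` occupies at most
`α·p` residue classes mod `p` for every prime `p`, then `|S| ≤ C(α)·N^α`. -/
theorem gallagher_larger_sieve_bound (α : ℝ) (hα : 0 < α) :
    ∃ C : ℝ, 0 < C ∧
      ∀ (N : ℕ), 1 ≤ N → ∀ S : Finset ℕ, (∀ s ∈ S, s ≤ N) →
        (∀ p : ℕ, p.Prime → ((S.image (fun s : ℕ => (s : ZMod p))).card : ℝ) ≤ α * p) →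
        (S.card : ℝ) ≤ C * (N : ℝ) ^ α := by
  refine ⟨Real.exp (1 + α * (Real.log 4 + 4)), Real.exp_pos _, fun N hN S hSN hS => ?_⟩
  rcases S.eq_empty_or_nonempty with rfl | hS_ne
  · simp only [card_empty, CharP.cast_eq_zero]; positivity
  have hN_pos : (0 : ℝ) < N := by exact_mod_cast hN
  calc (#S : ℝ) = Real.exp (Real.log #S) :=
        (Real.exp_log (by exact_mod_cast hS_ne.card_pos)).symm
    _ ≤ Real.exp (1 + α * (Real.log 4 + 4) + α * Real.log N) :=
        Real.exp_le_exp.2 (LargerSieve.log_card_le hα.le hSN hS hS_ne)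
    _ = Real.exp (1 + α * (Real.log 4 + 4)) * (N : ℝ) ^ α := by
        rw [Real.exp_add, Real.rpow_def_of_pos hN_pos, mul_comm (Real.log N)]
end

section
/- Let X ⊆ {0,...,N} and Q = N^γ with γ > 0. Let c₁, c₂ > 0 and suppose there is a set P of primes p ≤ Q with ∑_{p∈P} (log p)/p ≥ c₁·log Q, such that for each p ∈ P at least c₂·|X| elements of X lie in at most α·p residue classes mod p, where α > 0 is independent of p. Then if α is sufficiently small in terms of c₁, c₂, γ, we must have |X| < Q. -/
/-!
Count, with weight `log p`, the pairs `(x, y) ∈ X²` with `x ≡ y (mod p)`. For each `p ∈ P`,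
Cauchy–Schwarz over the at most `αp` classes occupied by `X_p` gives at least `(c₂|X|)²/(αp)`
such pairs, so the weighted count is at least `(c₂|X|)² c₁ log Q / α`. On the other hand two
distinct `x, y ≤ N` are congruent only modulo primes dividing `x - y`, whose logarithms add up to
at most `log N`, while the diagonal contributes `|X| ∑_{p ∈ P} log p ≤ |X| Q log Q`. If `|X| ≥ Q`
this forces `c₁ c₂² γ / α ≤ 1 + γ`.
-/

open Finset

section Collisions

variable {α β : Type*} [DecidableEq β]

def collisionPairs (f : α → β) (s : Finset α) : Finset (α × α) :=
  {xy ∈ s ×ˢ s | f xy.1 = f xy.2}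

lemma collisionPairs_mono (f : α → β) {s t : Finset α} (h : s ⊆ t) :
    collisionPairs f s ⊆ collisionPairs f t :=
  filter_subset_filter _ (product_subset_product h h)

lemma card_collisionPairs_eq_sum_sq (f : α → β) (s : Finset α) :
    #(collisionPairs f s) = ∑ b ∈ s.image f, #{x ∈ s | f x = b} ^ 2 := by
  rw [card_eq_sum_card_fiberwise (f := fun xy => f xy.1) (t := s.image f)]
  · refine sum_congr rfl fun b _ => ?_
    rw [sq, ← card_product]
    congr 1
    ext ⟨x, y⟩
    simp only [collisionPairs, mem_filter, mem_product]
    grind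
  · exact fun xy hxy => mem_image_of_mem f (mem_product.1 (mem_filter.1 hxy).1).1

lemma sq_card_le_card_image_mul_card_collisionPairs (f : α → β) (s : Finset α) :
    #s ^ 2 ≤ #(s.image f) * #(collisionPairs f s) := by
  rw [card_collisionPairs_eq_sum_sq, card_eq_sum_card_image f s]
  exact sq_sum_le_card_mul_sum_sq

lemma sq_div_le_card_collisionPairs (f : α → β) {s t : Finset α} (hts : t ⊆ s) {m K : ℝ}
    (hm : 0 ≤ m) (hK : 0 < K) (hmt : m ≤ #t) (himage : (#(t.image f) : ℝ) ≤ K) :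
    m ^ 2 / K ≤ #(collisionPairs f s) := by
  rw [div_le_iff₀ hK]
  calc m ^ 2 ≤ (#t : ℝ) ^ 2 := pow_le_pow_left₀ hm hmt 2
    _ ≤ #(t.image f) * #(collisionPairs f t) := by
      exact_mod_cast sq_card_le_card_image_mul_card_collisionPairs f t
    _ ≤ K * #(collisionPairs f s) := by
      gcongr
      exact collisionPairs_mono f hts
    _ = #(collisionPairs f s) * K := mul_comm _ _

end Collisions

lemma sum_mul_card_filter_eq_sum_sum_filter {ι κ R : Type*} [CommSemiring R] (P : Finset ι)
    (T : Finset κ) (r : ι → κ → Prop) [∀ i, DecidablePred (r i)] [∀ t, DecidablePred (r · t)]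
    (w : ι → R) :
    ∑ i ∈ P, w i * (#{t ∈ T | r i t} : R) = ∑ t ∈ T, ∑ i ∈ P with r i t, w i := by
  simp only [card_filter, Nat.cast_sum, Nat.cast_ite, Nat.cast_one, Nat.cast_zero, mul_sum,
    mul_ite, mul_one, mul_zero, sum_filter]
  exact sum_comm

lemma sum_log_le_log_of_forall_prime_dvd {s : Finset ℕ} {d : ℕ} (hd : d ≠ 0)
    (hs : ∀ p ∈ s, p.Prime ∧ p ∣ d) : ∑ p ∈ s, Real.log p ≤ Real.log d := by
  have hprod : ∏ p ∈ s, p ∣ d :=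
    prod_primes_dvd d (fun p hp => (hs p hp).1.prime) fun p hp => (hs p hp).2
  rw [← Real.log_prod fun p hp => by exact_mod_cast (hs p hp).1.ne_zero, ← Nat.cast_prod]
  exact Real.log_le_log (by exact_mod_cast Nat.pos_of_dvd_of_pos hprod (Nat.pos_of_ne_zero hd))
    (by exact_mod_cast Nat.le_of_dvd (Nat.pos_of_ne_zero hd) hprod)

lemma sum_log_le_log_of_natCast_eq {N x y : ℕ} (hx : x ≤ N) (hy : y ≤ N) (hxy : x ≠ y)
    {P : Finset ℕ} (hP : ∀ p ∈ P, p.Prime) :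
    ∑ p ∈ P with (x : ZMod p) = y, Real.log p ≤ Real.log N := by
  refine (sum_log_le_log_of_forall_prime_dvd (d := ((y : ℤ) - x).natAbs) (by omega)
    fun p hp => ?_).trans ?_
  · rw [mem_filter] at hp
    refine ⟨hP p hp.1, Int.natCast_dvd.1 ?_⟩
    rw [← ZMod.intCast_eq_intCast_iff_dvd_sub]
    exact_mod_cast hp.2
  exact Real.log_le_log (by exact_mod_cast (show 0 < ((y : ℤ) - x).natAbs by omega))
    (by exact_mod_cast (show ((y : ℤ) - x).natAbs ≤ N by omega))

lemma cast_card_le_of_forall_pos_le {s : Finset ℕ} {Q : ℝ} (hQ : 0 ≤ Q)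
    (hs : ∀ n ∈ s, 0 < n ∧ (n : ℝ) ≤ Q) : (#s : ℝ) ≤ Q := by
  have hsub : s ⊆ Icc 1 ⌊Q⌋₊ := fun n hn =>
    mem_Icc.2 ⟨(hs n hn).1, Nat.le_floor (hs n hn).2⟩
  calc (#s : ℝ) ≤ ⌊Q⌋₊ := by simpa using card_le_card hsub
    _ ≤ Q := Nat.floor_le hQ

lemma sum_log_mul_card_collisionPairs_le {N : ℕ} {X P : Finset ℕ} (hX : ∀ x ∈ X, x ≤ N)
    (hP : ∀ p ∈ P, p.Prime) :
    ∑ p ∈ P, Real.log p * #(collisionPairs (fun x : ℕ => (x : ZMod p)) X) ≤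
      #X ^ 2 * Real.log N + #X * ∑ p ∈ P, Real.log p := by
  have hdiag : ∑ xy ∈ X ×ˢ X, (if xy.1 = xy.2 then ∑ p ∈ P, Real.log p else 0) =
      #X * ∑ p ∈ P, Real.log p := by
    rw [← sum_filter, ← diag_eq_filter, sum_const, diag_card, nsmul_eq_mul]
  calc ∑ p ∈ P, Real.log p * #(collisionPairs (fun x : ℕ => (x : ZMod p)) X)
      = ∑ xy ∈ X ×ˢ X, ∑ p ∈ P with (xy.1 : ZMod p) = xy.2, Real.log p :=
        sum_mul_card_filter_eq_sum_sum_filter P (X ×ˢ X) (fun p xy => (xy.1 : ZMod p) = xy.2) _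
    _ ≤ ∑ xy ∈ X ×ˢ X, (Real.log N + if xy.1 = xy.2 then ∑ p ∈ P, Real.log p else 0) := by
        gcongr with xy hxy
        obtain ⟨hx, hy⟩ := mem_product.1 hxy
        split_ifs with h
        · refine le_add_of_nonneg_of_le (Real.log_natCast_nonneg N) ?_
          exact sum_le_sum_of_subset_of_nonneg (filter_subset _ _)
            fun p _ _ => Real.log_natCast_nonneg p
        · simpa using sum_log_le_log_of_natCast_eq (hX _ hx) (hX _ hy) h hP
    _ = _ := by
        rw [sum_add_distrib, sum_const, card_product, nsmul_eq_mul, hdiag]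
        push_cast
        ring

theorem larger_sieve_inequality {N : ℕ} {X P : Finset ℕ} {α m : ℝ} (hα : 0 < α) (hm : 0 ≤ m)
    (hX : ∀ x ∈ X, x ≤ N) (hP : ∀ p ∈ P, p.Prime)
    (hXp : ∀ p ∈ P, ∃ Xp ⊆ X, m ≤ #Xp ∧ (#(Xp.image (fun x : ℕ => (x : ZMod p))) : ℝ) ≤ α * p) :
    m ^ 2 / α * ∑ p ∈ P, Real.log p / p ≤ #X ^ 2 * Real.log N + #X * ∑ p ∈ P, Real.log p := by
  refine le_trans ?_ (sum_log_mul_card_collisionPairs_le hX hP)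
  rw [mul_sum]
  refine sum_le_sum fun p hp => ?_
  obtain ⟨Xp, hXpX, hmXp, himage⟩ := hXp p hp
  have hp : (0 : ℝ) < p := by exact_mod_cast (hP p hp).pos
  calc m ^ 2 / α * (Real.log p / p) = Real.log p * (m ^ 2 / (α * p)) := by
        field_simp
    _ ≤ Real.log p * #(collisionPairs (fun x : ℕ => (x : ZMod p)) X) := by
        gcongr
        exact sq_div_le_card_collisionPairs _ hXpX hm (by positivity) hmXp himage

/-- Lemma 3.1, weighted larger sieve: let `Q = N^γ`.  If there is a set `P`
of primes `p ≤ Q` with `∑_{p∈P} (log p)/p ≥ c₁ log Q` such that for each `p ∈ P` at least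
`c₂|X|` elements of `X ⊆ {0,…,N}` lie in at most `α·p` residue classes mod `p`, then for
`α` sufficiently small in terms of `c₁, c₂, γ` we must have `|X| < Q`. -/
theorem weighted_larger_sieve
    (γ c₁ c₂ : ℝ) (hγ : 0 < γ) (hc₁ : 0 < c₁) (hc₂ : 0 < c₂) :
    ∃ α₀ : ℝ, 0 < α₀ ∧
      ∀ α : ℝ, 0 < α → α ≤ α₀ →
        ∀ N : ℕ, 2 ≤ N →
          ∀ X : Finset ℕ, (∀ x ∈ X, x ≤ N) →
            ∀ P : Finset ℕ,
              (∀ p ∈ P, p.Prime ∧ (p : ℝ) ≤ (N : ℝ) ^ γ) →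
              c₁ * Real.log ((N : ℝ) ^ γ) ≤ ∑ p ∈ P, Real.log p / p →
              (∀ p ∈ P, ∃ Xp ⊆ X, c₂ * (X.card : ℝ) ≤ (Xp.card : ℝ) ∧
                  ((Xp.image (fun x : ℕ => (x : ZMod p))).card : ℝ) ≤ α * p) →
              (X.card : ℝ) < (N : ℝ) ^ γ := by
  refine ⟨c₁ * c₂ ^ 2 * γ / (2 * (1 + γ)), by positivity, ?_⟩
  intro α hα hαα₀ N hN X hX P hP hPsum hXp
  by_contra! hQX
  set Q := (N : ℝ) ^ γ
  set L := Real.log N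
  have hL : 0 < L := Real.log_pos (by exact_mod_cast hN)
  have hlogQ : Real.log Q = γ * L := Real.log_rpow (by positivity) γ
  have hXpos : 0 < (#X : ℝ) := lt_of_lt_of_le (by positivity) hQX
  have hsieve := larger_sieve_inequality hα (by positivity) hX (fun p hp => (hP p hp).1) hXp
  have hlogP : ∑ p ∈ P, Real.log p ≤ #X * (γ * L) :=
    calc ∑ p ∈ P, Real.log p ≤ #P * Real.log Q := by
          rw [← nsmul_eq_mul]
          exact sum_le_card_nsmul _ _ _ fun p hp =>
            Real.log_le_log (by exact_mod_cast (hP p hp).1.pos) (hP p hp).2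
      _ ≤ #X * (γ * L) := by
          rw [hlogQ]
          refine mul_le_mul_of_nonneg_right ?_ (by positivity)
          exact (cast_card_le_of_forall_pos_le (by positivity)
            fun p hp => ⟨(hP p hp).1.pos, (hP p hp).2⟩).trans hQX
  have hratio : c₁ * c₂ ^ 2 * γ / α * (#X ^ 2 * L) ≤ (1 + γ) * (#X ^ 2 * L) :=
    calc c₁ * c₂ ^ 2 * γ / α * (#X ^ 2 * L) = (c₂ * #X) ^ 2 / α * (c₁ * Real.log Q) := by
          rw [hlogQ]; ring
      _ ≤ (c₂ * #X) ^ 2 / α * ∑ p ∈ P, Real.log p / p := by gcongr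
      _ ≤ #X ^ 2 * L + #X * (#X * (γ * L)) := hsieve.trans (by gcongr)
      _ = (1 + γ) * (#X ^ 2 * L) := by ring
  have hα₀ : 2 * (1 + γ) ≤ c₁ * c₂ ^ 2 * γ / α := by
    rw [le_div_iff₀ (by positivity)] at hαα₀
    rw [le_div_iff₀ hα]
    linarith
  linarith [le_of_mul_le_mul_right hratio (by positivity)]
end

section
/- Let Q = N^γ with γ > 0, and let P be a set of primes p ≤ Q with ∑_{p∈P} (log p)/p ≥ c₁·log Q for some c₁ > 0. If S ⊆ {0,...,N}^d occupies fewer than c₂ residue classes mod p (i.e., the image of S in (ℤ/pℤ)^d has size < c₂) for every p ∈ P, then |S| = O_{c₁,c₂,γ}(1); in fact |S| ≤ c₂ for N sufficiently large. -/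
/-!
Gallagher's larger sieve. If every reduction mod `p ∈ P` has at most `K < |S|` classes, then
Cauchy–Schwarz on the fibres, together with the fact that two distinct points of `{0,…,N}^d` are
congruent only modulo primes of total weight `∑ log p ≤ log N`, gives
`∑_{p∈P} log p ≤ K² log N`. On the other hand the primes `p ≤ T` contribute at most
`(T + 1) log T` to `∑ log p / p ≥ c₁ γ log N`, and the others satisfy `log p / p ≤ log p / T`,
so `∑_{p∈P} log p ≥ T (c₁ γ log N - (T + 1) log T)`. With `K = ⌊c₂⌋₊`, `T ≫ K² / (c₁ γ)` and
`N` large this is a contradiction as soon as `|S| > c₂`.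
-/

open Finset Real

section LargerSieve

variable {ι α : Type*} {β : ι → Type*} [∀ i, DecidableEq (β i)]

theorem sq_card_le_card_image_mul_sum_card_fiber {γ : Type*} [DecidableEq γ]
    (S : Finset α) (g : α → γ) :
    #S ^ 2 ≤ #(S.image g) * ∑ x ∈ S, #{y ∈ S | g y = g x} := by
  rw [sum_comp (fun b => #{y ∈ S | g y = b}) g, card_eq_sum_card_image g S]
  simpa [sq] using
    sq_sum_le_card_mul_sum_sq (s := S.image g) (f := fun b => #{y ∈ S | g y = b})

theorem sum_mul_card_fiber_eq (S : Finset α) (P : Finset ι) (g : ∀ i, α → β i)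
    (w : ι → ℝ) (x : α) :
    ∑ i ∈ P, w i * #{y ∈ S | g i y = g i x} =
      ∑ y ∈ S, ∑ i ∈ P with g i y = g i x, w i := by
  simp only [card_filter, Nat.cast_sum, Nat.cast_ite, Nat.cast_one, Nat.cast_zero, mul_sum,
    mul_ite, mul_one, mul_zero, sum_filter]
  exact sum_comm

theorem sum_mul_sum_card_fiber_le [DecidableEq α] (S : Finset α) (P : Finset ι)
    (g : ∀ i, α → β i) (w : ι → ℝ) (B : ℝ)
    (hB : ∀ x ∈ S, ∀ y ∈ S, x ≠ y → ∑ i ∈ P with g i x = g i y, w i ≤ B) :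
    ∑ i ∈ P, w i * ∑ x ∈ S, (#{y ∈ S | g i y = g i x} : ℝ)
      ≤ #S * (∑ i ∈ P, w i + (#S - 1) * B) := by
  simp only [mul_sum]
  rw [sum_comm]
  calc ∑ x ∈ S, ∑ i ∈ P, w i * #{y ∈ S | g i y = g i x}
      = ∑ x ∈ S, ∑ y ∈ S, ∑ i ∈ P with g i y = g i x, w i :=
        sum_congr rfl fun x _ => sum_mul_card_fiber_eq S P g w x
    _ ≤ ∑ x ∈ S, (∑ i ∈ P, w i + (#S - 1) * B) := by
        refine sum_le_sum fun x hx => ?_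
        rw [← add_sum_erase S _ hx, filter_true_of_mem fun _ _ => rfl]
        gcongr
        calc ∑ y ∈ S.erase x, ∑ i ∈ P with g i y = g i x, w i
            ≤ #(S.erase x) • B := sum_le_card_nsmul _ _ _ fun y hy =>
              hB y (mem_of_mem_erase hy) x hx (ne_of_mem_erase hy)
          _ = (#S - 1) * B := by
              rw [nsmul_eq_mul, card_erase_of_mem hx, Nat.cast_pred (card_pos.2 ⟨x, hx⟩)]
    _ = #S * (∑ i ∈ P, w i + (#S - 1) * B) := by rw [sum_const, nsmul_eq_mul]

theorem larger_sieve [DecidableEq α] (S : Finset α) (P : Finset ι) (g : ∀ i, α → β i)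
    (w : ι → ℝ) (hw : ∀ i ∈ P, 0 ≤ w i) (K : ℕ) (hK : ∀ i ∈ P, #(S.image (g i)) ≤ K)
    (B : ℝ) (hB : ∀ x ∈ S, ∀ y ∈ S, x ≠ y → ∑ i ∈ P with g i x = g i y, w i ≤ B) :
    (∑ i ∈ P, w i) * #S ^ 2 ≤ K * (#S * (∑ i ∈ P, w i + (#S - 1) * B)) := by
  have hfiber : ∀ i ∈ P,
      w i * #S ^ 2 ≤ K * (w i * ∑ x ∈ S, (#{y ∈ S | g i y = g i x} : ℝ)) := by
    intro i hi
    have hcs : (#S ^ 2 : ℝ) ≤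
        #(S.image (g i)) * ∑ x ∈ S, (#{y ∈ S | g i y = g i x} : ℝ) := by
      exact_mod_cast sq_card_le_card_image_mul_sum_card_fiber S (g i)
    have hKi : (#(S.image (g i)) : ℝ) ≤ K := by exact_mod_cast hK i hi
    calc w i * #S ^ 2 ≤ w i * (K * ∑ x ∈ S, (#{y ∈ S | g i y = g i x} : ℝ)) :=
          mul_le_mul_of_nonneg_left (hcs.trans (by gcongr)) (hw i hi)
      _ = _ := by ring
  calc (∑ i ∈ P, w i) * #S ^ 2
        ≤ ∑ i ∈ P, K * (w i * ∑ x ∈ S, (#{y ∈ S | g i y = g i x} : ℝ)) := by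
        rw [sum_mul]; exact sum_le_sum hfiber
    _ ≤ K * (#S * (∑ i ∈ P, w i + (#S - 1) * B)) := by
        rw [← mul_sum]; gcongr; exact sum_mul_sum_card_fiber_le S P g w B hB

theorem larger_sieve_of_lt_card [DecidableEq α] (S : Finset α) (P : Finset ι)
    (g : ∀ i, α → β i) (w : ι → ℝ) (hw : ∀ i ∈ P, 0 ≤ w i) (K : ℕ)
    (hK : ∀ i ∈ P, #(S.image (g i)) ≤ K) (hKS : K < #S) (B : ℝ)
    (hB : ∀ x ∈ S, ∀ y ∈ S, x ≠ y → ∑ i ∈ P with g i x = g i y, w i ≤ B) :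
    ∑ i ∈ P, w i ≤ K ^ 2 * B := by
  -- Sieving a subset of exactly `K + 1` points turns the quadratic inequality into a linear one.
  obtain ⟨S', hS'S, hS'⟩ := exists_subset_card_eq hKS
  have hsieve := larger_sieve S' P g w hw K
    (fun i hi => (card_le_card (image_subset_image hS'S)).trans (hK i hi)) B
    (fun x hx y hy => hB x (hS'S hx) y (hS'S hy))
  rw [hS'] at hsieve
  push_cast at hsieve
  have hlin : (K + 1 : ℝ) * ((K + 1) * ∑ i ∈ P, w i) ≤
      (K + 1) * (K * (∑ i ∈ P, w i + K * B)) := by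
    linarith
  linarith [le_of_mul_le_mul_left hlin (by positivity)]

end LargerSieve

theorem sum_log_le_log_of_prime_dvd {P : Finset ℕ} {n : ℕ} (hn : n ≠ 0)
    (hP : ∀ p ∈ P, p.Prime ∧ p ∣ n) : ∑ p ∈ P, log p ≤ log n := by
  have hsub : P ⊆ n.primeFactors := fun p hp =>
    Nat.mem_primeFactors.2 ⟨(hP p hp).1, (hP p hp).2, hn⟩
  have hprod : ∏ p ∈ P, p ≤ n :=
    Nat.le_of_dvd (Nat.pos_of_ne_zero hn)
      ((prod_dvd_prod_of_subset _ _ _ hsub).trans (Nat.prod_primeFactors_dvd n))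
  rw [← log_prod fun p hp => by exact_mod_cast (hP p hp).1.ne_zero, ← Nat.cast_prod]
  exact log_le_log (by exact_mod_cast prod_pos fun p hp => (hP p hp).1.pos)
    (by exact_mod_cast hprod)

theorem sum_log_le_log_of_intCast_eq {d N : ℕ} {x y : Fin d → ℤ} (hxy : x ≠ y)
    (hx : ∀ i, 0 ≤ x i ∧ x i ≤ N) (hy : ∀ i, 0 ≤ y i ∧ y i ≤ N) {P : Finset ℕ}
    (hP : ∀ p ∈ P, p.Prime) :
    ∑ p ∈ P with (fun i => (x i : ZMod p)) = (fun i => (y i : ZMod p)), log p ≤ log N := by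
  obtain ⟨i, hi⟩ := Function.ne_iff.mp hxy
  have hdiff : (x i - y i).natAbs ≤ N := by have := hx i; have := hy i; omega
  calc ∑ p ∈ P with (fun i => (x i : ZMod p)) = (fun i => (y i : ZMod p)), log p
      ≤ log (x i - y i).natAbs := by
        refine sum_log_le_log_of_prime_dvd (by omega) fun p hp => ?_
        obtain ⟨hpP, hxyp⟩ := mem_filter.1 hp
        refine ⟨hP p hpP, Int.natCast_dvd.1 ?_⟩
        exact (ZMod.intCast_eq_intCast_iff_dvd_sub _ _ _).1 (congrFun hxyp i).symm
    _ ≤ log N := log_le_log (by norm_cast; omega) (by exact_mod_cast hdiff)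

theorem sum_log_div_le (P : Finset ℕ) {T : ℕ} (hT : 0 < T) :
    ∑ p ∈ P, log p / p ≤ (T + 1) * log T + (∑ p ∈ P, log p) / T := by
  have hterm : ∀ p ∈ P, log p / p ≤ (if p ≤ T then log T else 0) + log p / T := by
    intro p _
    split_ifs with hpT
    · have hsmall_p : log p / p ≤ log T := by
        rcases Nat.eq_zero_or_pos p with rfl | hp
        · simpa using log_natCast_nonneg T
        · exact (div_le_self (log_natCast_nonneg p) (by exact_mod_cast hp)).trans
            (log_le_log (by exact_mod_cast hp) (by exact_mod_cast hpT))
      have hnonneg : 0 ≤ log p / T := div_nonneg (log_natCast_nonneg p) (Nat.cast_nonneg T)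
      linarith
    · rw [zero_add]
      exact div_le_div_of_nonneg_left (log_natCast_nonneg p) (by exact_mod_cast hT)
        (by exact_mod_cast (not_le.1 hpT).le)
  have hsmall : (#{p ∈ P | p ≤ T} : ℝ) ≤ T + 1 := by
    have hsub : {p ∈ P | p ≤ T} ⊆ range (T + 1) := fun p hp =>
      mem_range.2 (Nat.lt_succ_of_le (mem_filter.1 hp).2)
    exact_mod_cast (card_le_card hsub).trans (card_range (T + 1)).le
  calc ∑ p ∈ P, log p / p ≤ ∑ p ∈ P, ((if p ≤ T then log T else 0) + log p / T) :=
        sum_le_sum hterm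
    _ = #{p ∈ P | p ≤ T} * log T + (∑ p ∈ P, log p) / T := by
        rw [sum_add_distrib, ← sum_filter, sum_const, nsmul_eq_mul, sum_div]
    _ ≤ (T + 1) * log T + (∑ p ∈ P, log p) / T := by gcongr

theorem sum_log_le_sq_mul_log {d N K : ℕ} {S : Finset (Fin d → ℤ)}
    (hS : ∀ x ∈ S, ∀ i, 0 ≤ x i ∧ x i ≤ N) {P : Finset ℕ} (hP : ∀ p ∈ P, p.Prime)
    (himg : ∀ p ∈ P, #(S.image fun s i => (s i : ZMod p)) ≤ K) (hKS : K < #S) :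
    ∑ p ∈ P, log p ≤ K ^ 2 * log N :=
  larger_sieve_of_lt_card S P (fun p s i => (s i : ZMod p)) (fun p => log p)
    (fun p _ => log_natCast_nonneg p) K himg hKS (log N)
    fun _ hx _ hy hxy => sum_log_le_log_of_intCast_eq hxy (hS _ hx) (hS _ hy) hP

/-- Lemma 3.2: with `Q = N^γ` and `P` a set of primes `p ≤ Q` of weight
`∑_{p∈P} (log p)/p ≥ c₁ log Q`, any `S ⊆ {0,…,N}^d` occupying fewer than `c₂` residue
classes mod `p` for all `p ∈ P` satisfies `|S| ≤ c₂` once `N` is sufficiently large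
(in terms of `c₁, c₂, γ` and `d`). -/
theorem few_classes_implies_bounded
    (d : ℕ) (γ c₁ c₂ : ℝ) (hγ : 0 < γ) (hc₁ : 0 < c₁) (hc₂ : 0 < c₂) :
    ∃ N₀ : ℕ, ∀ N : ℕ, N₀ ≤ N →
      ∀ S : Finset (Fin d → ℤ), (∀ x ∈ S, ∀ i, 0 ≤ x i ∧ x i ≤ (N : ℤ)) →
        ∀ P : Finset ℕ,
          (∀ p ∈ P, p.Prime ∧ (p : ℝ) ≤ (N : ℝ) ^ γ) →
          c₁ * Real.log ((N : ℝ) ^ γ) ≤ ∑ p ∈ P, Real.log p / p →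
          (∀ p ∈ P, ((S.image (fun s i => ((s i : ZMod p)))).card : ℝ) < c₂) →
          (S.card : ℝ) ≤ c₂ := by
  set K := ⌊c₂⌋₊
  set T := ⌈2 * K ^ 2 / (c₁ * γ)⌉₊ + 1
  have hT : 0 < T := Nat.succ_pos _
  have hTK : 2 * (K : ℝ) ^ 2 ≤ c₁ * γ * T := by
    rw [← div_le_iff₀' (by positivity)]
    exact (Nat.le_ceil _).trans (by push_cast [T]; linarith)
  obtain ⟨N₀, hN₀⟩ := Filter.eventually_atTop.1 <|
    (tendsto_log_atTop.comp tendsto_natCast_atTop_atTop).eventually_gt_atTop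
      (2 * ((T + 1) * log T) / (c₁ * γ))
  refine ⟨N₀, fun N hN S hS P hP hsum himg => ?_⟩
  by_contra! hSc
  have hlogN : 2 * ((T + 1) * log T) < c₁ * γ * log N := by
    rw [← div_lt_iff₀' (by positivity)]; exact hN₀ N hN
  have hlogN_pos : 0 < log N :=
    pos_of_mul_pos_right (hlogN.trans_le' (by positivity)) (by positivity)
  have hN : (0 : ℝ) < N :=
    Nat.cast_pos.2 (Nat.pos_of_ne_zero (by rintro rfl; simp at hlogN_pos))
  have hupper : ∑ p ∈ P, log p ≤ K ^ 2 * log N :=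
    sum_log_le_sq_mul_log hS (fun p hp => (hP p hp).1)
      (fun p hp => Nat.le_floor (himg p hp).le) ((Nat.floor_lt hc₂.le).2 hSc)
  have hlarge : (∑ p ∈ P, log p) / T ≤ c₁ * γ * log N / 2 := by
    rw [div_le_iff₀ (by exact_mod_cast hT)]
    linarith [mul_le_mul_of_nonneg_right hTK hlogN_pos.le]
  have hlower := sum_log_div_le P hT
  rw [log_rpow hN] at hsum
  linarith
end

section
/- Siegel's lemma: Given a system of m linear equations ∑_{j=1}^n a_{ij}β_j = 0 (1 ≤ i ≤ m) in n > m unknowns, where the a_{ij} are integers not all zero with |a_{ij}| ≤ C, there exists a nontrivial integer solution (β₁,...,β_n) with |β_j| ≤ 1 + (Cn)^{m/(n−m)} for all j. -/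
/-! Pigeonhole: for `B = ⌊(C n)^{m/(n-m)}⌋`, the `(B + 1)^n` integer vectors with entries in
`[0, B]` are mapped by the coefficient matrix into a box with fewer than `(B + 1)^n` integer
points, so two of them have the same image and their difference is a nontrivial solution with
entries bounded by `B`. This is Mathlib's `Int.Matrix.exists_ne_zero_int_vec_norm_le'`, whose
bound is stated with the entrywise sup norm of the matrix. -/

attribute [local instance] Matrix.seminormedAddCommGroup

theorem Int.Matrix.norm_le_of_forall_abs_le {ι κ : Type*} [Fintype ι] [Fintype κ]
    {A : Matrix ι κ ℤ} {C : ℝ} (hC : 0 ≤ C) (h : ∀ i j, (|A i j| : ℝ) ≤ C) : ‖A‖ ≤ C :=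
  (Matrix.norm_le_iff hC).2 fun i j => by simpa only [Int.norm_eq_abs, Int.cast_abs] using h i j

theorem siegel_lemma_general
    (m n : ℕ) (hmn : m < n) (a : Fin m → Fin n → ℤ) (ha : a ≠ 0)
    (C : ℝ) (hbound : ∀ i j, (|a i j| : ℝ) ≤ C) :
    ∃ β : Fin n → ℤ, β ≠ 0 ∧
      (∀ i, ∑ j, a i j * β j = 0) ∧
      ∀ j, (|β j| : ℝ) ≤ 1 + (C * n) ^ ((m : ℝ) / ((n : ℝ) - (m : ℝ))) := by
  obtain ⟨i₀, j₀, -⟩ : ∃ i j, a i j ≠ 0 := by simpa [funext_iff] using ha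
  have hnorm : ‖Matrix.of a‖ ≤ C :=
    Int.Matrix.norm_le_of_forall_abs_le ((abs_nonneg _).trans (hbound i₀ j₀)) hbound
  have hexp : 0 ≤ (m : ℝ) / ((n : ℝ) - (m : ℝ)) :=
    div_nonneg m.cast_nonneg (sub_nonneg.2 (by exact_mod_cast hmn.le))
  obtain ⟨β, hβ0, hβa, hβle⟩ := Int.Matrix.exists_ne_zero_int_vec_norm_le' (Matrix.of a)
    (by simpa using hmn) (by simpa using i₀.pos) ha
  refine ⟨β, hβ0, fun i => congrFun hβa i, fun j => ?_⟩
  calc (|β j| : ℝ) = ‖β j‖ := (Int.norm_eq_abs _).symm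
    _ ≤ ‖β‖ := norm_le_pi_norm β j
    _ ≤ (n * ‖Matrix.of a‖) ^ ((m : ℝ) / ((n : ℝ) - (m : ℝ))) := by simpa using hβle
    _ ≤ (C * n) ^ ((m : ℝ) / ((n : ℝ) - (m : ℝ))) := by rw [mul_comm C]; gcongr
    _ ≤ 1 + (C * n) ^ ((m : ℝ) / ((n : ℝ) - (m : ℝ))) := le_add_of_nonneg_left zero_le_one

/-- Siegel's lemma: a system of `m` homogeneous linear equations in `n > m`
integer unknowns, with integer coefficients not all zero bounded in absolute value by `C`,
has a nontrivial integer solution with `|β_j| ≤ 1 + (Cn)^{m/(n−m)}` for all `j`. -/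
theorem siegel_lemma
    (m n : ℕ) (hmn : m < n) (a : Fin m → Fin n → ℤ) (ha : a ≠ 0)
    (C : ℝ) (hC : 0 < C) (hbound : ∀ i j, (|a i j| : ℝ) ≤ C) :
    ∃ β : Fin n → ℤ, β ≠ 0 ∧
      (∀ i, ∑ j, a i j * β j = 0) ∧
      ∀ j, (|β j| : ℝ) ≤ 1 + (C * n) ^ ((m : ℝ) / ((n : ℝ) - (m : ℝ))) :=
  siegel_lemma_general m n hmn a ha C hbound
end

section
/- Let S be a finite set and suppose that for some δ > 0 and η with 0 < η < 1 and every subset S' ⊆ S with |S'| ≥ η|S| there exists a subset A' ⊆ S' with |A'| ≤ M that is (r,δ)-characteristic for S'. Then there exists a subset A ⊆ S of size |A| ≤ M·⌈log(η)/log(1−δ)⌉ that is (r, 1−η)-characteristic for S. -/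
/-- An `r`-polynomial (relative to the box `{0,…,N}^d`): an integer polynomial `f` with
`|f(n)| < N^{3r}` for every `n ∈ {0,…,N}^d`. -/
def IsRPolynomial (N d r : ℕ) (f : MvPolynomial (Fin d) ℤ) : Prop :=
  ∀ x : Fin d → ℤ, (∀ i, 0 ≤ x i ∧ x i ≤ (N : ℤ)) →
    |MvPolynomial.eval x f| < (N : ℤ) ^ (3 * r)

/-- `A` is `(r,δ)`-characteristic for `T`: `A ⊆ T` and there is `B` with `A ⊆ B ⊆ T`,
`|B| ≥ δ|T|`, such that every `r`-polynomial vanishing on `A` vanishes on `B`. -/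
def IsCharacteristic (N d r : ℕ) (δ : ℝ) (A T : Finset (Fin d → ℤ)) : Prop :=
  A ⊆ T ∧ ∃ B : Finset (Fin d → ℤ), A ⊆ B ∧ B ⊆ T ∧ δ * (T.card : ℝ) ≤ (B.card : ℝ) ∧
    ∀ f : MvPolynomial (Fin d) ℤ, IsRPolynomial N d r f →
      (∀ a ∈ A, MvPolynomial.eval a f = 0) → ∀ b ∈ B, MvPolynomial.eval b f = 0

/-- iterative exhaustion.  If every subset `S' ⊆ S` with `|S'| ≥ η|S|` admits
an `(r,δ)`-characteristic subset of size at most `M`, then `S` admits an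
`(r,1−η)`-characteristic subset of size at most `M·⌈log η / log(1−δ)⌉`. -/
theorem characteristic_set_exhaustion
    (N d r M : ℕ) (δ η : ℝ) (hδ : 0 < δ) (hδ1 : δ < 1) (hη0 : 0 < η) (hη1 : η < 1)
    (S : Finset (Fin d → ℤ))
    (hyp : ∀ S' ⊆ S, η * (S.card : ℝ) ≤ (S'.card : ℝ) →
      ∃ A' ⊆ S', A'.card ≤ M ∧ IsCharacteristic N d r δ A' S') :
    ∃ A ⊆ S, A.card ≤ M * ⌈Real.log η / Real.log (1 - δ)⌉₊ ∧
      IsCharacteristic N d r (1 - η) A S := by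
  have hδ0' : (0:ℝ) < 1 - δ := by linarith
  set K := ⌈Real.log η / Real.log (1 - δ)⌉₊ with hKdef
  -- key induction
  have key : ∀ k : ℕ, ∃ A B : Finset (Fin d → ℤ), A ⊆ B ∧ B ⊆ S ∧
      A.card ≤ M * k ∧
      (∀ f : MvPolynomial (Fin d) ℤ, IsRPolynomial N d r f →
        (∀ a ∈ A, MvPolynomial.eval a f = 0) → ∀ b ∈ B, MvPolynomial.eval b f = 0) ∧
      (((S \ B).card : ℝ) ≤ η * S.card ∨ ((S \ B).card : ℝ) ≤ (1-δ)^k * S.card) := by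
    intro k
    induction k with
    | zero =>
      exact ⟨∅, ∅, subset_rfl, Finset.empty_subset _, by simp, by simp,
        Or.inr (by simp)⟩
    | succ k ih =>
      obtain ⟨A, B, hAB, hBS, hAcard, hvan, hrem⟩ := ih
      by_cases hsmall : ((S \ B).card : ℝ) ≤ η * S.card
      · exact ⟨A, B, hAB, hBS, hAcard.trans (Nat.mul_le_mul_left _ (Nat.le_succ k)),
          hvan, Or.inl hsmall⟩
      · have hbig : η * S.card ≤ ((S \ B).card : ℝ) := le_of_not_ge hsmall
        have hrem' : ((S \ B).card : ℝ) ≤ (1-δ)^k * S.card := by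
          rcases hrem with h | h
          · exact absurd h hsmall
          · exact h
        obtain ⟨A', hA'sub, hA'card, hA'T, B', hA'B', hB'T, hB'card, hB'van⟩ :=
          hyp (S \ B) (Finset.sdiff_subset) hbig
        refine ⟨A ∪ A', B ∪ B', Finset.union_subset_union hAB hA'B',
          Finset.union_subset hBS (hB'T.trans Finset.sdiff_subset), ?_, ?_, Or.inr ?_⟩
        · calc (A ∪ A').card ≤ A.card + A'.card := Finset.card_union_le _ _
            _ ≤ M * k + M := Nat.add_le_add hAcard hA'card
            _ = M * (k + 1) := by ring
        · intro f hf hvA b hb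
          have hvA1 : ∀ a ∈ A, MvPolynomial.eval a f = 0 := fun a ha =>
            hvA a (Finset.mem_union_left _ ha)
          have hvA2 : ∀ a ∈ A', MvPolynomial.eval a f = 0 := fun a ha =>
            hvA a (Finset.mem_union_right _ ha)
          rcases Finset.mem_union.1 hb with hb | hb
          · exact hvan f hf hvA1 b hb
          · exact hB'van f hf hvA2 b hb
        · have hsd : S \ (B ∪ B') = (S \ B) \ B' := by
            ext x; simp only [Finset.mem_sdiff, Finset.mem_union]; tauto
          rw [hsd, Finset.card_sdiff_of_subset hB'T]
          have hle : B'.card ≤ (S \ B).card := Finset.card_le_card hB'T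
          push_cast [hle]
          have hstep : ((S \ B).card : ℝ) - B'.card ≤ (1 - δ) * ((S \ B).card : ℝ) := by
            nlinarith [hB'card]
          calc ((S \ B).card : ℝ) - B'.card ≤ (1 - δ) * ((S \ B).card : ℝ) := hstep
            _ ≤ (1 - δ) * ((1 - δ) ^ k * S.card) :=
                mul_le_mul_of_nonneg_left hrem' (le_of_lt hδ0')
            _ = (1 - δ) ^ (k + 1) * S.card := by ring
  -- use key at K
  obtain ⟨A, B, hAB, hBS, hAcard, hvan, hrem⟩ := key K
  have hlogη : Real.log η < 0 := Real.log_neg hη0 hη1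
  have hlogδ : Real.log (1 - δ) < 0 := Real.log_neg hδ0' (by linarith)
  have hKge : Real.log η / Real.log (1 - δ) ≤ (K : ℝ) := Nat.le_ceil _
  have hpow : (1 - δ) ^ K ≤ η := by
    have h1 : (K : ℝ) * Real.log (1 - δ) ≤ Real.log η := by
      rw [div_le_iff_of_neg hlogδ] at hKge
      linarith [hKge]
    have h2 : Real.log ((1 - δ) ^ K) ≤ Real.log η := by
      rwa [Real.log_pow]
    exact (Real.log_le_log_iff (pow_pos hδ0' K) hη0).mp h2
  have hsdcard : ((S \ B).card : ℝ) ≤ η * S.card := by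
    rcases hrem with h | h
    · exact h
    · exact h.trans (by nlinarith [Nat.cast_nonneg (α := ℝ) S.card])
  have hcardB : (1 - η) * S.card ≤ (B.card : ℝ) := by
    have h1 : ((S \ B).card : ℝ) = (S.card : ℝ) - B.card := by
      rw [Finset.card_sdiff_of_subset hBS]
      push_cast [Finset.card_le_card hBS]
      ring
    linarith
  exact ⟨A, hAB.trans hBS, hAcard, hAB.trans hBS, B, hAB, hBS, hcardB, hvan⟩
end

section
/- Let S ⊆ {0,...,N}^d with d ≥ 1 and let Q > 0. If |S| ≥ 2^d·Q^d, then there exists an index i with 1 ≤ i ≤ d and a subset S' ⊆ S with |S'| ≥ |S|/2^d such that every subset A ⊆ S' with |A| ≥ |S'|/2 satisfies |π_i(A)| ≥ Q, where π_i is projection to the i-th coordinate. -/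
/-- Any finite set of functions has cardinality at most the product of the cardinalities
of its coordinate projections. -/
lemma card_le_prod_proj {d : ℕ} (T : Finset (Fin d → ℤ)) :
    T.card ≤ ∏ i : Fin d, (T.image (fun x => x i)).card := by
  have hsub : T ⊆ Fintype.piFinset (fun i => T.image (fun x => x i)) := by
    intro x hx
    simp only [Fintype.mem_piFinset]
    intro i
    exact Finset.mem_image_of_mem _ hx
  calc T.card ≤ (Fintype.piFinset (fun i => T.image (fun x => x i))).card :=
        Finset.card_le_card hsub
    _ = ∏ i : Fin d, (T.image (fun x => x i)).card := Fintype.card_piFinset _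

/-- if `S ⊆ {0,…,N}^d` satisfies `|S| ≥ 2^d Q^d`, then for some coordinate
`i` there is `S' ⊆ S` with `|S'| ≥ |S|/2^d` such that every `A ⊆ S'` of density at least
`1/2` has first-coordinate projection `π_i(A)` of size at least `Q`. -/
theorem large_projection_subset
    (d N : ℕ) (hd : 0 < d) (Q : ℝ) (hQ : 0 < Q)
    (S : Finset (Fin d → ℤ))
    (hS : ∀ x ∈ S, ∀ i, 0 ≤ x i ∧ x i ≤ (N : ℤ))
    (hcard : 2 ^ d * Q ^ d ≤ (S.card : ℝ)) :
    ∃ i : Fin d, ∃ S' ⊆ S, (S.card : ℝ) / 2 ^ d ≤ (S'.card : ℝ) ∧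
      ∀ A ⊆ S', (S'.card : ℝ) / 2 ≤ (A.card : ℝ) →
        Q ≤ ((A.image (fun x => x i)).card : ℝ) := by
  by_contra hcon
  push_neg at hcon
  -- hcon : ∀ i, ∀ S' ⊆ S, density → ∃ A ⊆ S', density ∧ projection small
  have key : ∀ k, k ≤ d → ∃ T ⊆ S, (S.card : ℝ) / 2 ^ k ≤ (T.card : ℝ) ∧
      ∀ j : Fin d, (j : ℕ) < k → ((T.image (fun x => x j)).card : ℝ) < Q := by
    intro k
    induction k with
    | zero =>
      intro _
      exact ⟨S, Finset.Subset.refl S, by simp, fun j hj => absurd hj (Nat.not_lt_zero _)⟩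
    | succ k ih =>
      intro hk1
      obtain ⟨T, hTS, hTcard, hTproj⟩ := ih (Nat.le_of_succ_le hk1)
      have hkd : k < d := hk1
      have hdens : (S.card : ℝ) / 2 ^ d ≤ (T.card : ℝ) := by
        refine le_trans ?_ hTcard
        apply div_le_div_of_nonneg_left (by positivity) (by positivity)
        exact pow_le_pow_right₀ (by norm_num) (Nat.le_of_succ_le hk1)
      obtain ⟨A, hAT, hAcard, hAproj⟩ := hcon ⟨k, hkd⟩ T hTS hdens
      refine ⟨A, hAT.trans hTS, ?_, ?_⟩
      · calc (S.card : ℝ) / 2 ^ (k + 1) = ((S.card : ℝ) / 2 ^ k) / 2 := by ring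
          _ ≤ (T.card : ℝ) / 2 := by linarith
          _ ≤ (A.card : ℝ) := hAcard
      · intro j hj
        rcases Nat.lt_succ_iff_lt_or_eq.mp hj with hj' | hj'
        · refine lt_of_le_of_lt ?_ (hTproj j hj')
          exact_mod_cast Finset.card_le_card (Finset.image_subset_image hAT)
        · have : j = ⟨k, hkd⟩ := Fin.ext hj'
          rw [this]
          exact hAproj
  obtain ⟨T, hTS, hTcard, hTproj⟩ := key d le_rfl
  have hQd : Q ^ d ≤ (T.card : ℝ) := by
    have h2 : (0:ℝ) < 2 ^ d := by positivity
    have : Q ^ d ≤ (S.card : ℝ) / 2 ^ d := by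
      rw [le_div_iff₀ h2]; linarith
    linarith
  have hTne : T.Nonempty := by
    rw [← Finset.card_pos]
    by_contra h
    push_neg at h
    interval_cases h' : T.card <;> simp_all <;> nlinarith [pow_pos hQ d]
  have hle : (T.card : ℝ) ≤ ∏ i : Fin d, ((T.image (fun x => x i)).card : ℝ) := by
    have := card_le_prod_proj T
    calc (T.card : ℝ) ≤ ((∏ i : Fin d, (T.image (fun x => x i)).card : ℕ) : ℝ) := by
          exact_mod_cast this
      _ = ∏ i : Fin d, ((T.image (fun x => x i)).card : ℝ) := by push_cast; rfl
  have hlt : ∏ i : Fin d, ((T.image (fun x => x i)).card : ℝ) < ∏ _i : Fin d, Q := by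
    apply Finset.prod_lt_prod_of_nonempty
    · intro i _
      have : (T.image (fun x => x i)).Nonempty := hTne.image _
      have := Finset.card_pos.mpr this
      exact_mod_cast this
    · intro i _
      exact hTproj i i.isLt
    · exact ⟨⟨0, hd⟩, Finset.mem_univ _⟩
  rw [Finset.prod_const, Finset.card_univ, Fintype.card_fin] at hlt
  linarith
end

section
/- For every 0 < η < 1 and every sufficiently large N, there exists a set X ⊆ {0,...,N} of size |X| ≥ (log N)^η/2 − 1 such that for every prime p, the image of X in ℤ/pℤ has size at most p^η. -/
open Filter Real

/-- for every `0 < η < 1` and all sufficiently large `N`, there is a set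
`X ⊆ {0,…,N}` with `|X| ≥ (log N)^η/2 − 1` occupying at most `p^η` residue classes mod `p`
for every prime `p`. -/
theorem ill_distributed_set_exists (η : ℝ) (hη0 : 0 < η) (hη1 : η < 1) :
    ∃ N₀ : ℕ, ∀ N : ℕ, N₀ ≤ N →
      ∃ X : Finset ℕ, (∀ x ∈ X, x ≤ N) ∧
        (Real.log N) ^ η / 2 - 1 ≤ (X.card : ℝ) ∧
        ∀ p : ℕ, p.Prime →
          ((X.image (fun x : ℕ => (x : ZMod p))).card : ℝ) ≤ (p : ℝ) ^ η := by
  have hη0' : (0:ℝ) ≤ η := hη0.le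
  set c : ℝ := 2/3 * Real.log 4 with hc_def
  have hlog4 : Real.log 4 = 2 * Real.log 2 := by
    rw [show (4:ℝ) = 2^2 by norm_num, Real.log_pow]; push_cast; ring
  have hc1 : c < 1 := by
    have := Real.log_two_lt_d9
    rw [hc_def, hlog4]; nlinarith
  have hc0 : 0 < c := by
    have := Real.log_two_gt_d9
    rw [hc_def, hlog4]; nlinarith
  have hlog : Tendsto (fun N : ℕ => Real.log N) atTop atTop :=
    Real.tendsto_log_atTop.comp tendsto_natCast_atTop_atTop
  -- eventual inequality in the real variable
  have hEv : ∀ᶠ t : ℝ in atTop, 4 * t ^ η ≤ Real.exp ((1 - c) * t) := by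
    have h := (isLittleO_rpow_exp_pos_mul_atTop η (by linarith : (0:ℝ) < 1 - c)).def
      (by norm_num : (0:ℝ) < 1/4)
    filter_upwards [h, eventually_ge_atTop (0:ℝ)] with t ht ht0
    rw [Real.norm_eq_abs, Real.norm_eq_abs, abs_of_nonneg (Real.rpow_nonneg ht0 _),
      abs_of_pos (Real.exp_pos _)] at ht
    linarith
  have hA : ∀ᶠ N : ℕ in atTop, 6 ≤ Real.log N ^ η := by
    have := ((tendsto_rpow_atTop hη0).comp hlog).eventually_ge_atTop 6
    filter_upwards [this] with N h using h
  rw [← Filter.eventually_atTop]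
  filter_upwards [hA, hlog.eventually hEv, eventually_ge_atTop 3] with N hA hB hN3
  set L := Real.log N with hL_def
  have hN0 : (0:ℝ) < N := by positivity
  have hN0' : (0:ℝ) < (N:ℝ) := by
    have : (3:ℝ) ≤ N := by exact_mod_cast hN3
    linarith
  have hL1 : 1 ≤ L := by
    rw [hL_def, Real.le_log_iff_exp_le hN0']
    have h1 := Real.exp_one_lt_d9
    have : (3:ℝ) ≤ N := by exact_mod_cast hN3
    linarith
  have hL0 : (0:ℝ) ≤ L := by linarith
  set m : ℕ := ⌈L ^ η / 2⌉₊ with hm_def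
  have hm_lb : L ^ η / 2 ≤ (m:ℝ) := Nat.le_ceil _
  have hm_ub : (m:ℝ) ≤ 2/3 * L ^ η := by
    have h1 : (m:ℝ) < L ^ η / 2 + 1 := Nat.ceil_lt_add_one (by positivity)
    linarith
  have hm3 : (3:ℝ) ≤ (m:ℝ) := by linarith
  have hm0 : 0 < m := by exact_mod_cast lt_of_lt_of_le (by norm_num : (0:ℝ) < 3) hm3
  set B : ℕ := ⌈(m:ℝ) ^ (1/η)⌉₊ with hB_def
  have hB_lb : (m:ℝ) ^ (1/η) ≤ (B:ℝ) := Nat.le_ceil _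
  have hB_ub : (B:ℝ) ≤ 2/3 * L + 1 := by
    have h1 : (B:ℝ) < (m:ℝ) ^ (1/η) + 1 :=
      Nat.ceil_lt_add_one (Real.rpow_nonneg (Nat.cast_nonneg m) _)
    have h2 : (m:ℝ) ^ (1/η) ≤ 2/3 * L := by
      have hmn : (0:ℝ) ≤ (m:ℝ) := Nat.cast_nonneg m
      calc (m:ℝ) ^ (1/η) ≤ (2/3 * L ^ η) ^ (1/η) :=
            Real.rpow_le_rpow hmn hm_ub (by positivity)
        _ = (2/3:ℝ) ^ (1/η) * (L ^ η) ^ (1/η) :=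
            Real.mul_rpow (by norm_num) (Real.rpow_nonneg hL0 _)
        _ = (2/3:ℝ) ^ (1/η) * L := by
            rw [← Real.rpow_mul hL0, mul_one_div, div_self hη0.ne', Real.rpow_one]
        _ ≤ (2/3:ℝ) * L := by
            have : (2/3:ℝ) ^ (1/η) ≤ (2/3:ℝ) ^ (1:ℝ) :=
              Real.rpow_le_rpow_of_exponent_ge (by norm_num) (by norm_num)
                ((one_le_one_div hη0 hη1.le))
            rw [Real.rpow_one] at this
            exact mul_le_mul_of_nonneg_right this hL0
    linarith
  set R : ℕ := primorial B with hR_def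
  have hR0 : 0 < R := primorial_pos B
  -- main size bound
  have hmRN : (m * R : ℕ) ≤ N := by
    have hR4 : (R:ℝ) ≤ (4:ℝ) ^ (B:ℕ) := by exact_mod_cast primorial_le_4_pow B
    have h4B : (4:ℝ) ^ (B:ℕ) ≤ 4 * Real.exp (c * L) := by
      have e1 : (4:ℝ) ^ (B:ℕ) = (4:ℝ) ^ (B:ℝ) := by rw [Real.rpow_natCast]
      have e2 : (4:ℝ) ^ (B:ℝ) ≤ (4:ℝ) ^ (2/3 * L + 1) :=
        Real.rpow_le_rpow_of_exponent_le (by norm_num) hB_ub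
      have e3 : (4:ℝ) ^ (2/3 * L + 1) = 4 * Real.exp (c * L) := by
        rw [Real.rpow_add (by norm_num : (0:ℝ) < 4), Real.rpow_one,
          Real.rpow_def_of_pos (by norm_num : (0:ℝ) < 4)]
        rw [hc_def]; ring_nf
      rw [e1]; rw [e3] at e2; exact e2
    have key : (m:ℝ) * (R:ℝ) ≤ (N:ℝ) := by
      have h1 : (m:ℝ) * (R:ℝ) ≤ (2/3 * L ^ η) * (4 * Real.exp (c * L)) := by
        apply mul_le_mul hm_ub (hR4.trans h4B) (Nat.cast_nonneg R) (by positivity)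
      have h2 : (2/3 * L ^ η) * (4 * Real.exp (c * L)) ≤
          Real.exp ((1 - c) * L) * Real.exp (c * L) := by
        have hexp : (0:ℝ) < Real.exp (c * L) := Real.exp_pos _
        have : 2/3 * L ^ η * 4 ≤ Real.exp ((1 - c) * L) := by
          have hpow : (0:ℝ) ≤ L ^ η := Real.rpow_nonneg hL0 _
          nlinarith [hB]
        nlinarith
      have h3 : Real.exp ((1 - c) * L) * Real.exp (c * L) = (N:ℝ) := by
        rw [← Real.exp_add, show (1 - c) * L + c * L = L by ring, hL_def,
          Real.exp_log hN0']
      linarith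
    exact_mod_cast (by push_cast; exact key : ((m * R : ℕ) : ℝ) ≤ (N:ℝ))
  refine ⟨(Finset.range m).image (fun i => i * R), ?_, ?_, ?_⟩
  · intro x hx
    simp only [Finset.mem_image, Finset.mem_range] at hx
    obtain ⟨i, hi, rfl⟩ := hx
    calc i * R ≤ m * R := Nat.mul_le_mul_right R hi.le
      _ ≤ N := hmRN
  · have hcard : ((Finset.range m).image (fun i => i * R)).card = m := by
      rw [Finset.card_image_of_injective _ (fun a b h => Nat.eq_of_mul_eq_mul_right hR0 h),
        Finset.card_range]
    rw [hcard]
    linarith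
  · intro p hp
    by_cases hpB : p ≤ B
    · -- p divides R, so everything is ≡ 0
      have hpR : p ∣ R := by
        rw [hR_def, primorial]
        exact Finset.dvd_prod_of_mem (fun q => q)
          (by simp [Finset.mem_filter, Finset.mem_range, Nat.lt_succ_iff, hpB, hp])
      have hsub : ((Finset.range m).image (fun i => i * R)).image
          (fun x : ℕ => (x : ZMod p)) ⊆ {0} := by
        intro y hy
        simp only [Finset.mem_image, Finset.mem_range] at hy
        obtain ⟨x, ⟨i, hi, rfl⟩, rfl⟩ := hy
        simp only [Finset.mem_singleton]
        push_cast
        rw [(ZMod.natCast_eq_zero_iff R p).mpr hpR]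
        ring
      have h1 : (((Finset.range m).image (fun i => i * R)).image
          (fun x : ℕ => (x : ZMod p))).card ≤ 1 := by
        simpa using Finset.card_le_card hsub
      have hp1 : (1:ℝ) ≤ (p:ℝ) ^ η := by
        have : (1:ℝ) ≤ (p:ℝ) := by exact_mod_cast hp.one_lt.le
        calc (1:ℝ) = (1:ℝ) ^ η := (Real.one_rpow η).symm
          _ ≤ (p:ℝ) ^ η := Real.rpow_le_rpow zero_le_one this hη0'
      calc ((((Finset.range m).image (fun i => i * R)).image
          (fun x : ℕ => (x : ZMod p))).card : ℝ) ≤ 1 := by exact_mod_cast h1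
        _ ≤ (p:ℝ) ^ η := hp1
    · -- p > B : the image has at most m elements and m ≤ p ^ η
      push_neg at hpB
      have hcard : (((Finset.range m).image (fun i => i * R)).image
          (fun x : ℕ => (x : ZMod p))).card ≤ m := by
        calc (((Finset.range m).image (fun i => i * R)).image
            (fun x : ℕ => (x : ZMod p))).card
            ≤ ((Finset.range m).image (fun i => i * R)).card := Finset.card_image_le
          _ ≤ (Finset.range m).card := Finset.card_image_le
          _ = m := Finset.card_range m
      have hmp : (m:ℝ) ≤ (p:ℝ) ^ η := by
        have h1 : (m:ℝ) ^ (1/η) ≤ (p:ℝ) := by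
          have : (B:ℝ) ≤ (p:ℝ) := by exact_mod_cast hpB.le
          linarith [hB_lb]
        calc (m:ℝ) = ((m:ℝ) ^ (1/η)) ^ η := by
              rw [← Real.rpow_mul (Nat.cast_nonneg m), one_div,
                inv_mul_cancel₀ hη0.ne', Real.rpow_one]
          _ ≤ (p:ℝ) ^ η := Real.rpow_le_rpow (Real.rpow_nonneg (Nat.cast_nonneg m) _) h1 hη0'
      calc ((((Finset.range m).image (fun i => i * R)).image
          (fun x : ℕ => (x : ZMod p))).card : ℝ) ≤ (m:ℝ) := by exact_mod_cast hcard
        _ ≤ (p:ℝ) ^ η := hmp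
end

section
/- Sharpness of Theorem 1.1: For integers d ≥ h+1 ≥ 2 and all sufficiently large N, there exists a set S ⊆ {0,...,N}^d with |S| ≥ c·N^{d−h−1}·log N for some absolute constant c > 0 such that S occupies at most p^{d−h} residue classes mod p for every prime p, i.e., |[S]_p| ≤ p^{d−h}. -/
/-- sharpness of Theorem 1.1: for integers `d ≥ h+1 ≥ 2` there is `c > 0`
such that for all sufficiently large `N` there exists `S ⊆ {0,…,N}^d` of size
`|S| ≥ c·N^{d−h−1}·log N` occupying at most `p^{d−h}` residue classes mod `p` for every
prime `p`. -/
theorem sharpness_example (d h : ℕ) (hh : 1 ≤ h) (hd : h + 1 ≤ d) :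
    ∃ c : ℝ, 0 < c ∧ ∃ N₀ : ℕ, ∀ N : ℕ, N₀ ≤ N →
      ∃ S : Finset (Fin d → ℕ),
        (∀ x ∈ S, ∀ i, x i ≤ N) ∧
        c * (N : ℝ) ^ (d - h - 1) * Real.log N ≤ (S.card : ℝ) ∧
        ∀ p : ℕ, p.Prime →
          ((S.image (fun x i => ((x i : ZMod p)))).card : ℝ) ≤ (p : ℝ) ^ (d - h) := by
  refine ⟨1, one_pos, 1, fun N hN => ?_⟩
  have hN1 : (1:ℝ) ≤ N := by exact_mod_cast hN
  set L : ℕ := ⌊Real.log N⌋₊ with hL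
  have hm : 1 ≤ d - h := by omega
  have hLN : L ≤ N := by
    have h1 : Real.log N ≤ (N:ℝ) := (Real.log_le_sub_one_of_pos (by linarith)).trans (by linarith)
    calc L ≤ ⌊(N:ℝ)⌋₊ := Nat.floor_le_floor h1
      _ = N := Nat.floor_natCast N
  set C : Fin d → Finset ℕ :=
    fun i => if i.val = 0 then Finset.range (L+1)
      else if i.val < d - h then Finset.range (N+1) else {0} with hC
  refine ⟨Fintype.piFinset C, ?_, ?_, ?_⟩
  · intro x hx i
    have hmem := (Fintype.mem_piFinset.mp hx) i
    simp only [hC] at hmem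
    split_ifs at hmem with h0 h1
    · have := Finset.mem_range.mp hmem; omega
    · have := Finset.mem_range.mp hmem; omega
    · have := Finset.mem_singleton.mp hmem; omega
  · -- cardinality
    have hcard : (Fintype.piFinset C).card = (L+1) * (N+1)^(d - h - 1) := by
      rw [Fintype.card_piFinset]
      have : ∀ i : Fin d, (C i).card =
          (fun j => if j = 0 then L+1 else if j < d - h then N+1 else 1) i.val := by
        intro i
        by_cases h0 : i.val = 0
        · simp [hC, h0, (by omega : (0:ℕ) < d - h)]
        · by_cases h1 : i.val < d - h <;> simp [hC, h0, h1]
      rw [Finset.prod_congr rfl (fun i _ => this i), Fin.prod_univ_eq_prod_range (fun j => if j = 0 then L+1 else if j < d - h then N+1 else 1) d]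
      rw [Finset.range_eq_Ico, ← Finset.prod_Ico_consecutive _ (Nat.zero_le (d-h)) (by omega : d - h ≤ d)]
      have h2 : ∏ j ∈ Finset.Ico (d-h) d,
          (if j = 0 then L+1 else if j < d - h then N+1 else 1) = 1 := by
        apply Finset.prod_eq_one
        intro j hj
        have := Finset.mem_Ico.mp hj
        rw [if_neg (by omega : ¬ j = 0), if_neg (by omega : ¬ j < d - h)]
      rw [h2, mul_one, ← Finset.range_eq_Ico]
      have h3 : d - h = (d - h - 1) + 1 := by omega
      rw [h3, Finset.prod_range_succ']
      have h4 : ∏ i ∈ Finset.range (d - h - 1),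
          (if i + 1 = 0 then L+1 else if i + 1 < d - h - 1 + 1 then N+1 else 1) = (N+1)^(d-h-1) := by
        rw [Finset.prod_congr rfl (fun i hi => ?_), Finset.prod_const, Finset.card_range]
        have := Finset.mem_range.mp hi
        rw [if_neg (by omega : ¬ i + 1 = 0), if_pos (by omega : i + 1 < d - h - 1 + 1)]
      rw [h4, if_pos rfl, Nat.add_sub_cancel, mul_comm]
    rw [hcard]
    push_cast
    have hlog : Real.log N < (L:ℝ) + 1 := Nat.lt_floor_add_one _
    have hlog0 : 0 ≤ Real.log N := Real.log_nonneg hN1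
    have hpow : (N:ℝ)^(d-h-1) ≤ ((N:ℝ)+1)^(d-h-1) := by
      apply pow_le_pow_left₀ (by linarith) (by linarith)
    calc 1 * (N:ℝ)^(d-h-1) * Real.log N = (N:ℝ)^(d-h-1) * Real.log N := by ring
      _ ≤ ((N:ℝ)+1)^(d-h-1) * ((L:ℝ)+1) := by
          apply mul_le_mul hpow (le_of_lt hlog) hlog0 (by positivity)
      _ = ((L:ℝ)+1) * ((N:ℝ)+1)^(d-h-1) := by ring
  · intro p hp
    haveI : Fact p.Prime := ⟨hp⟩
    set T := (Fintype.piFinset C).image (fun x i => ((x i : ZMod p)))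
    have hinj : Set.InjOn (fun (f : Fin d → ZMod p) (j : Fin (d-h)) => f (Fin.castLE (Nat.sub_le d h) j)) T := by
      intro f hf g hg hfg
      obtain ⟨x, hx, rfl⟩ := Finset.mem_image.mp hf
      obtain ⟨y, hy, rfl⟩ := Finset.mem_image.mp hg
      funext i
      by_cases h1 : i.val < d - h
      · have := congrFun hfg ⟨i.val, h1⟩
        simpa using this
      · have hx0 : x i = 0 := by
          have := (Fintype.mem_piFinset.mp hx) i
          simp only [hC, if_neg (by omega : ¬ i.val = 0), if_neg h1, Finset.mem_singleton] at this
          exact this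
        have hy0 : y i = 0 := by
          have := (Fintype.mem_piFinset.mp hy) i
          simp only [hC, if_neg (by omega : ¬ i.val = 0), if_neg h1, Finset.mem_singleton] at this
          exact this
        simp [hx0, hy0]
    have hcardle : T.card ≤ p ^ (d - h) := by
      have := Finset.card_le_card_of_injOn _ (fun a _ => Finset.mem_univ _) hinj
      calc T.card ≤ (Finset.univ : Finset (Fin (d-h) → ZMod p)).card := this
        _ = Fintype.card (Fin (d-h) → ZMod p) := rfl
        _ = p ^ (d - h) := by simp [ZMod.card]
    calc (T.card : ℝ) ≤ ((p ^ (d-h) : ℕ) : ℝ) := by exact_mod_cast hcardle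
      _ = (p:ℝ) ^ (d-h) := by push_cast; ring
end
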